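/- arXiv:2009.08143 — 4 statements merged into one kernel-verified Lean document; each statement's English description precedes it below -/
import Mathlib

section
/- The exponential generating function F(x) = Σ_{k≥0} Ĩ_k(z)·x^k/k! of the sequence defined by Ĩ_0 = 1, Ĩ_1 = z, Ĩ_{k+1} = z·Ĩ_k + (k/4)(k-1-ω)·Ĩ_{k-1} satisfies the ODE (1 - x²/4)·F'(x) = (z - ωx/4)·F(x) with F(0) = 1, and equals F(x) = (1 - x/2)^{ω/2 - z}·(1 + x/2)^{ω/2 + z} for |x| < 2. -/
/-!
Dividing by `k!`, the coefficients `c k = Ĩ_k / k!` satisfy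
`(k+2) c_{k+2} = z c_{k+1} + (k - ω)/4 · c_k`, so `|c_k| r^k` satisfies
`|c_{k+2}| r^{k+2} ≤ max (|c_{k+1}| r^{k+1}) (|c_k| r^k)` for large `k` as soon as `r < 2`.
Hence the series has radius of convergence at least `2` and may be differentiated termwise;
comparing coefficients, the recurrence is exactly the ODE. The closed form solves the same
linear ODE and does not vanish on `(-2, 2)`, so the quotient of the two has zero derivative there.
-/

open Set
open scoped Nat

theorem hasSum_nat_add_one_iff_of_eq_zero {G : Type*} [AddCommGroup G] [TopologicalSpace G]
    [IsTopologicalAddGroup G] {f : ℕ → G} {a : G} (hf : f 0 = 0) :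
    HasSum (fun n => f (n + 1)) a ↔ HasSum f a := by
  simp [hasSum_nat_add_iff 1, hf]

theorem bddAbove_range_of_le_max {a : ℕ → ℝ} (N : ℕ)
    (h : ∀ n ≥ N, a (n + 2) ≤ max (a (n + 1)) (a n)) : BddAbove (Set.range a) := by
  refine ⟨(Finset.range (N + 2)).sup' ⟨0, by simp⟩ a, ?_⟩
  rintro _ ⟨n, rfl⟩
  induction n using Nat.strong_induction_on with
  | _ n ih =>
    rcases lt_or_ge n (N + 2) with hn | hn
    · exact Finset.le_sup' a (Finset.mem_range.mpr hn)
    · obtain ⟨m, rfl⟩ : ∃ m, n = m + 2 := ⟨n - 2, by omega⟩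
      exact (h m (by omega)).trans (max_le (ih _ (by omega)) (ih _ (by omega)))

section PowerSeries

variable {c : ℕ → ℝ} {r x : ℝ}

theorem summable_mul_pow_of_bddAbove (hc : BddAbove (Set.range fun n => |c n| * r ^ n))
    (hx : |x| < r) : Summable fun n => c n * x ^ n := by
  obtain ⟨C, hC⟩ := hc
  have hr : 0 < r := (abs_nonneg x).trans_lt hx
  refine .of_norm_bounded ((summable_geometric_of_lt_one (by positivity)
    ((div_lt_one hr).mpr hx)).mul_left C) fun n => ?_
  calc ‖c n * x ^ n‖ = |c n| * r ^ n * (|x| / r) ^ n := by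
        rw [Real.norm_eq_abs, abs_mul, abs_pow, div_pow, mul_assoc,
          mul_div_cancel₀ _ (by positivity)]
    _ ≤ C * (|x| / r) ^ n := by gcongr; exact hC (mem_range_self n)

theorem exists_hasDerivAt_tsum_mul_pow (hc : BddAbove (Set.range fun n => |c n| * r ^ n))
    (hx : |x| < r) : ∃ D, HasDerivAt (fun t => ∑' n, c n * t ^ n) D x ∧
      HasSum (fun n : ℕ => ((n : ℝ) + 1) * c (n + 1) * x ^ n) D := by
  obtain ⟨C, hC⟩ := hc
  obtain ⟨s, hxs, hsr⟩ := exists_between hx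
  have hs : 0 < s := (abs_nonneg x).trans_lt hxs
  have hr : 0 < r := hs.trans hsr
  have hq : 0 ≤ s / r := by positivity
  have hq₁ : s / r < 1 := (div_lt_one hr).mpr hsr
  have hx_mem : x ∈ Metric.ball (0 : ℝ) s := by simpa [Real.dist_eq] using hxs
  set u : ℕ → ℝ := fun n => C / s * (n * (s / r) ^ n)
  have hu : Summable u := by
    simpa using (summable_pow_mul_geometric_of_norm_lt_one 1
      (by rwa [Real.norm_eq_abs, abs_of_nonneg hq])).mul_left (C / s)
  have hbound : ∀ n, ∀ y ∈ Metric.ball (0 : ℝ) s,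
      ‖c n * (n * y ^ (n - 1))‖ ≤ u n := by
    rintro (_ | m) y hy
    · simp [u]
    have hy : |y| ≤ s := by simpa [Real.dist_eq] using (Metric.mem_ball.mp hy).le
    calc ‖c (m + 1) * ((m + 1 : ℕ) * y ^ (m + 1 - 1))‖
        ≤ (m + 1) / s * (|c (m + 1)| * s ^ (m + 1)) := by
          rw [Nat.add_sub_cancel, pow_succ, Real.norm_eq_abs, abs_mul, abs_mul, abs_pow]
          push_cast
          rw [abs_of_nonneg (by positivity : (0 : ℝ) ≤ m + 1)]
          field_simp
          gcongr
      _ = (m + 1) / s * (|c (m + 1)| * r ^ (m + 1) * (s / r) ^ (m + 1)) := by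
          rw [div_pow, mul_assoc, mul_div_cancel₀ _ (by positivity)]
      _ ≤ (m + 1) / s * (C * (s / r) ^ (m + 1)) := by
          gcongr; exact hC (mem_range_self _)
      _ = u (m + 1) := by simp only [u]; push_cast; ring
  have hderiv := hasDerivAt_tsum_of_isPreconnected hu Metric.isOpen_ball
    (convex_ball (0 : ℝ) s).isPreconnected
    (fun n y _ => (hasDerivAt_pow n y).const_mul (c n)) hbound
    (Metric.mem_ball_self hs)
    (by simpa using summable_mul_pow_of_bddAbove (x := 0) ⟨C, hC⟩ (by simpa using hr)) hx_mem
  refine ⟨_, hderiv, ?_⟩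
  have hsum := Summable.of_norm_bounded hu fun n => hbound n x hx_mem
  have hshift := (hasSum_nat_add_iff (f := fun n => c n * (n * x ^ (n - 1))) 1).mpr
    (by simpa using hsum.hasSum)
  have hterm (n : ℕ) :
      c (n + 1) * ((n + 1 : ℕ) * x ^ (n + 1 - 1)) = (n + 1) * c (n + 1) * x ^ n := by
    rw [Nat.add_sub_cancel]; push_cast; ring
  simpa only [hterm] using hshift

end PowerSeries

theorem IsOpen.eqOn_of_hasDerivAt_eq_mul_self {s : Set ℝ} (hs : IsOpen s)
    (hs' : IsPreconnected s) {a f g : ℝ → ℝ} (hf : ∀ x ∈ s, HasDerivAt f (a x * f x) x)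
    (hg : ∀ x ∈ s, HasDerivAt g (a x * g x) x) (hg₀ : ∀ x ∈ s, g x ≠ 0)
    {x₀ : ℝ} (hx₀ : x₀ ∈ s) (hfg : f x₀ = g x₀) : EqOn f g s := by
  have hquot : ∀ x ∈ s, HasDerivAt (f / g) 0 x := fun x hx =>
    ((hf x hx).div (hg x hx) (hg₀ x hx)).congr_deriv (by ring)
  intro x hx
  have := hs.is_const_of_deriv_eq_zero hs'
    (fun y hy => (hquot y hy).differentiableAt.differentiableWithinAt)
    (fun y hy => (hquot y hy).deriv) hx hx₀
  rwa [Pi.div_apply, Pi.div_apply, hfg, div_self (hg₀ x₀ hx₀),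
    div_eq_one_iff_eq (hg₀ x hx)] at this

section Recurrence

variable {ω z : ℝ} {c : ℕ → ℝ}
  (hc : ∀ n : ℕ, ((n : ℝ) + 2) * c (n + 2) = z * c (n + 1) + ((n : ℝ) - ω) / 4 * c n)
include hc

theorem abs_mul_pow_le_max {r : ℝ} (hr₀ : 0 ≤ r) {n : ℕ}
    (hn : |z| * r + (n + |ω|) * r ^ 2 / 4 ≤ n + 2) :
    |c (n + 2)| * r ^ (n + 2) ≤ max (|c (n + 1)| * r ^ (n + 1)) (|c n| * r ^ n) := by
  set M := max (|c (n + 1)| * r ^ (n + 1)) (|c n| * r ^ n)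
  have hM : 0 ≤ M := le_max_of_le_right (by positivity)
  have hrec : ((n : ℝ) + 2) * |c (n + 2)| ≤ |z| * |c (n + 1)| + (n + |ω|) / 4 * |c n| := by
    have hω : |(n : ℝ) - ω| ≤ n + |ω| := by
      simpa using abs_sub (n : ℝ) ω
    calc ((n : ℝ) + 2) * |c (n + 2)| = |z * c (n + 1) + ((n : ℝ) - ω) / 4 * c n| := by
          rw [← hc, abs_mul, abs_of_pos (by positivity : (0 : ℝ) < n + 2)]
      _ ≤ |z| * |c (n + 1)| + |(n : ℝ) - ω| / 4 * |c n| := by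
          grw [abs_add_le]; simp [abs_mul, abs_div]
      _ ≤ |z| * |c (n + 1)| + (n + |ω|) / 4 * |c n| := by gcongr
  have key : ((n : ℝ) + 2) * (|c (n + 2)| * r ^ (n + 2)) ≤ ((n : ℝ) + 2) * M :=
    calc ((n : ℝ) + 2) * (|c (n + 2)| * r ^ (n + 2))
        ≤ (|z| * |c (n + 1)| + (n + |ω|) / 4 * |c n|) * r ^ (n + 2) := by
          rw [← mul_assoc]; gcongr
      _ = |z| * r * (|c (n + 1)| * r ^ (n + 1)) + (n + |ω|) * r ^ 2 / 4 * (|c n| * r ^ n) := by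
          ring
      _ ≤ |z| * r * M + (n + |ω|) * r ^ 2 / 4 * M := by gcongr <;> simp [M]
      _ ≤ ((n : ℝ) + 2) * M := by rw [← add_mul]; gcongr
  exact le_of_mul_le_mul_left key (by positivity)

theorem bddAbove_range_abs_mul_pow {r : ℝ} (hr₀ : 0 ≤ r) (hr₂ : r < 2) :
    BddAbove (Set.range fun n => |c n| * r ^ n) := by
  have hr : 0 < 1 - r ^ 2 / 4 := by nlinarith
  obtain ⟨N, hN⟩ := exists_nat_ge ((|z| * r + |ω| * r ^ 2 / 4) / (1 - r ^ 2 / 4))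
  rw [div_le_iff₀ hr] at hN
  refine bddAbove_range_of_le_max N fun n hn => abs_mul_pow_le_max hc hr₀ ?_
  have : (N : ℝ) ≤ n := by exact_mod_cast hn
  nlinarith

theorem one_sub_sq_div_four_mul_eq_of_hasSum (hc₁ : c 1 = z * c 0) {x S D : ℝ}
    (hS : HasSum (fun n => c n * x ^ n) S)
    (hD : HasSum (fun n : ℕ => ((n : ℝ) + 1) * c (n + 1) * x ^ n) D) :
    (1 - x ^ 2 / 4) * D = (z - ω * x / 4) * S := by
  -- Both `D - z S` and `(x² D - ω x S) / 4` are the sum of `(n - ω) / 4 · c n · x^(n+1)`.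
  have h₁ : HasSum (fun n : ℕ => ((n : ℝ) - ω) / 4 * c n * x ^ (n + 1)) (D - z * S) := by
    refine ((hasSum_nat_add_one_iff_of_eq_zero ?_).mpr (hD.sub (hS.mul_left z))).congr_fun
      fun n => ?_
    · simp [hc₁]
    · push_cast
      linear_combination (-x ^ (n + 1)) * hc n
  have h₂ : HasSum (fun n : ℕ => ((n : ℝ) - ω) / 4 * c n * x ^ (n + 1))
      (x ^ 2 / 4 * D - ω * x / 4 * S) := by
    have hxD : HasSum (fun n : ℕ => (n : ℝ) / 4 * c n * x ^ (n + 1)) (x ^ 2 / 4 * D) :=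
      (hasSum_nat_add_one_iff_of_eq_zero (by simp)).mp <|
        (hD.mul_left (x ^ 2 / 4)).congr_fun fun n => by push_cast; ring
    exact (hxD.sub (hS.mul_left (ω * x / 4))).congr_fun fun n => by ring
  linear_combination h₁.unique h₂

end Recurrence

theorem hasDerivAt_one_sub_rpow_mul_one_add_rpow (ω z : ℝ) {x : ℝ}
    (hx : x ∈ Ioo (-2 : ℝ) 2) :
    HasDerivAt (fun t => (1 - t / 2) ^ (ω / 2 - z) * (1 + t / 2) ^ (ω / 2 + z))
      ((z - ω * x / 4) / (1 - x ^ 2 / 4) *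
        ((1 - x / 2) ^ (ω / 2 - z) * (1 + x / 2) ^ (ω / 2 + z))) x := by
  have h₁ : 0 < 1 - x / 2 := by linarith [hx.2]
  have h₂ : 0 < 1 + x / 2 := by linarith [hx.1]
  have hP := (((hasDerivAt_id x).div_const 2).const_sub 1).rpow_const
    (p := ω / 2 - z) (Or.inl h₁.ne')
  have hQ := (((hasDerivAt_id x).div_const 2).const_add 1).rpow_const
    (p := ω / 2 + z) (Or.inl h₂.ne')
  refine (hP.mul hQ).congr_deriv ?_
  simp only [id]
  rw [Real.rpow_sub_one h₁.ne', Real.rpow_sub_one h₂.ne']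
  have : 2 - x ≠ 0 := by linarith [hx.2]
  have : 2 + x ≠ 0 := by linarith [hx.1]
  have : 4 - x ^ 2 ≠ 0 := by nlinarith [hx.1, hx.2]
  field_simp
  ring

theorem eqOn_one_sub_rpow_mul_one_add_rpow {ω z : ℝ} {F : ℝ → ℝ} (hF₀ : F 0 = 1)
    (hF : ∀ x ∈ Ioo (-2 : ℝ) 2,
      ∃ d, HasDerivAt F d x ∧ (1 - x ^ 2 / 4) * d = (z - ω * x / 4) * F x) :
    EqOn F (fun x => (1 - x / 2) ^ (ω / 2 - z) * (1 + x / 2) ^ (ω / 2 + z)) (Ioo (-2) 2) := by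
  refine isOpen_Ioo.eqOn_of_hasDerivAt_eq_mul_self isPreconnected_Ioo (fun x hx => ?_)
    (fun x hx => hasDerivAt_one_sub_rpow_mul_one_add_rpow ω z hx) (fun x hx => ?_)
    (by norm_num : (0 : ℝ) ∈ Ioo (-2) 2) (by simp [hF₀])
  · obtain ⟨d, hd, hode⟩ := hF x hx
    have : 1 - x ^ 2 / 4 ≠ 0 := by nlinarith [hx.1, hx.2]
    exact hd.congr_deriv (by rw [div_mul_eq_mul_div, eq_div_iff this]; linarith)
  · have h₁ : 0 < 1 - x / 2 := by linarith [hx.2]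
    have h₂ : 0 < 1 + x / 2 := by linarith [hx.1]
    positivity

theorem mul_div_factorial_recurrence {ω z : ℝ} {I : ℕ → ℝ}
    (hrec : ∀ k : ℕ, 1 ≤ k →
      I (k + 1) = z * I k + (k : ℝ) / 4 * ((k : ℝ) - 1 - ω) * I (k - 1)) (n : ℕ) :
    ((n : ℝ) + 2) * (I (n + 2) / (n + 2)!) =
      z * (I (n + 1) / (n + 1)!) + ((n : ℝ) - ω) / 4 * (I n / (n ! : ℝ)) := by
  rw [hrec (n + 1) le_add_self, Nat.add_sub_cancel, Nat.factorial_succ, Nat.factorial_succ]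
  push_cast
  field_simp
  ring

/-- The exponential generating function `F(x) = Σ Ĩ_k x^k/k!` of the sequence
`Ĩ_0 = 1`, `Ĩ_1 = z`, `Ĩ_{k+1} = z Ĩ_k + (k/4)(k-1-ω) Ĩ_{k-1}` satisfies
`(1 - x²/4) F'(x) = (z - ωx/4) F(x)` with `F(0) = 1`, and equals
`(1-x/2)^{ω/2-z} (1+x/2)^{ω/2+z}` for `|x| < 2`. -/
theorem stmt1 (ω z : ℝ) (I : ℕ → ℝ)
    (h0 : I 0 = 1) (h1 : I 1 = z)
    (hrec : ∀ k : ℕ, 1 ≤ k →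
      I (k + 1) = z * I k + (k : ℝ) / 4 * ((k : ℝ) - 1 - ω) * I (k - 1)) :
    ∀ F : ℝ → ℝ, (F = fun x => ∑' k : ℕ, I k * x ^ k / (Nat.factorial k : ℝ)) →
      F 0 = 1 ∧
      ∀ x : ℝ, |x| < 2 →
        (∃ d : ℝ, HasDerivAt F d x ∧ (1 - x ^ 2 / 4) * d = (z - ω * x / 4) * F x) ∧
        F x = (1 - x / 2) ^ (ω / 2 - z) * (1 + x / 2) ^ (ω / 2 + z) := by
  intro F hF
  set c : ℕ → ℝ := fun n => I n / (n ! : ℝ)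
  have hc : ∀ n : ℕ, ((n : ℝ) + 2) * c (n + 2) = z * c (n + 1) + ((n : ℝ) - ω) / 4 * c n :=
    mul_div_factorial_recurrence hrec
  replace hF : F = fun x => ∑' n, c n * x ^ n := by
    simp only [hF, c, mul_div_right_comm]
  have hF₀ : F 0 = 1 := by
    simp only [hF]
    rw [tsum_eq_single 0 fun n hn => by simp [hn]]
    simp [c, h0]
  have hode : ∀ x ∈ Ioo (-2 : ℝ) 2,
      ∃ d, HasDerivAt F d x ∧ (1 - x ^ 2 / 4) * d = (z - ω * x / 4) * F x := by
    intro x hx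
    obtain ⟨r, hxr, hr₂⟩ := exists_between (abs_lt.mpr hx)
    have hbdd := bddAbove_range_abs_mul_pow hc ((abs_nonneg x).trans hxr.le) hr₂
    obtain ⟨D, hderiv, hD⟩ := exists_hasDerivAt_tsum_mul_pow hbdd hxr
    refine ⟨D, hF ▸ hderiv, ?_⟩
    rw [hF]
    exact one_sub_sq_div_four_mul_eq_of_hasSum hc (by simp [c, h0, h1])
      (summable_mul_pow_of_bddAbove hbdd hxr).hasSum hD
  exact ⟨hF₀, fun x hx => ⟨hode x (abs_lt.mp hx),
    eqOn_one_sub_rpow_mul_one_add_rpow hF₀ hode (abs_lt.mp hx)⟩⟩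
end

section
/- Suppose a sequence of polynomials Ĩ_k in a commuting variable z satisfies Ĩ_0 = 1, Ĩ_1 = z, and Ĩ_{k+1} = z·Ĩ_k + (k/4)(k-1-ω)·Ĩ_{k-1}, and suppose coefficients r̃_k satisfy (k - u)·r̃_k = ((k+2+u-ω)/4)·r̃_{k+2} with r̃_k = 0 for all k > K (some cutoff). Then the finite sum R(z) = Σ_{k=0}^{K} (r̃_k/k!)·Ĩ_k(z) satisfies (z - u)·R(z+1) = (z + u)·R(z-1) as an identity of polynomials in z, provided the stated truncation is consistent with the recurrences (i.e., (K+1-u)·r̃_{K+1} = 0 and (K-u)·r̃_K = 0 hold for indices beyond the cutoff as required). -/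
/-!
Write `J k = Ĩ_k / k!`, so that `R = ∑ r̃_k J_k`. Composition with `X + ε` and
multiplication by `X` both act on coefficient sequences. For `ε² = 1` the recurrence gives
`J_{k+1}(X + ε) - J_{k+1} = (ε/2) (J_k(X + ε) + J_k)`, so `R(X + ε)` has the coefficients
`s_ε = (1 + εD/2)(1 - εD/2)⁻¹ r̃`, where `D` is the shift `a_j ↦ a_{j+1}` (a finite sum,
since `r̃` has finite support); multiplication by `X` sends `a` to
`j a_{j-1} - ((j - ω)/4) a_{j+1}`. With `σ = (1 - D²/4)⁻¹ r̃` one has `s₁ - s₋₁ = 2Dσ` and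
`s₁ + s₋₁ = 2σ + D²σ/2`, and descending induction from the cutoff turns the recurrence of
`r̃` into `(2u - ω) σ_j = (j + u - ω) r̃_j`. These identities make every coefficient of
`(X - u) R(X + 1) - (X + u) R(X - 1)` vanish.
-/

open Polynomial Finset Nat

/-- `J k` plays the role of `Ĩ_k / k!`. -/
structure IsDividedSequence (ω : ℂ) (J : ℕ → ℂ[X]) : Prop where
  zero : J 0 = 1
  one : J 1 = X
  succ_succ : ∀ k : ℕ,
    ((k : ℂ[X]) + 2) * J (k + 2) = X * J (k + 1) + C (((k : ℂ) - ω) / 4) * J k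

namespace IsDividedSequence

variable {ω : ℂ} {J : ℕ → ℂ[X]}

theorem of_recurrence {I : ℕ → ℂ[X]} (h0 : I 0 = 1) (h1 : I 1 = X)
    (hrec : ∀ k : ℕ, 1 ≤ k →
      I (k + 1) = X * I k + C ((k : ℂ) / 4 * ((k : ℂ) - 1 - ω)) * I (k - 1)) :
    IsDividedSequence ω (fun k => C ((k ! : ℂ)⁻¹) * I k) where
  zero := by simp [h0]
  one := by simp [h1]
  succ_succ k := by
    have hk : (k ! : ℂ) ≠ 0 := Nat.cast_ne_zero.2 k.factorial_ne_zero
    have hk' : (k : ℂ) + 2 ≠ 0 := by exact_mod_cast (k + 1).succ_ne_zero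
    have hk1 : ((k + 1) ! : ℂ) = ((k : ℂ) + 1) * k ! := by
      push_cast [Nat.factorial_succ]; ring
    have hk2 : ((k + 2) ! : ℂ) = ((k : ℂ) + 2) * ((k : ℂ) + 1) * k ! := by
      push_cast [Nat.factorial_succ]; ring
    have hA : C ((k : ℂ) + 2) * C ((k + 2) ! : ℂ)⁻¹ = C ((k + 1) ! : ℂ)⁻¹ := by
      rw [← C_mul, hk1, hk2]; field_simp
    have hB : C ((k : ℂ) + 2) * C ((k + 2) ! : ℂ)⁻¹ *
        C (((k + 1 : ℕ) : ℂ) / 4 * (((k + 1 : ℕ) : ℂ) - 1 - ω)) =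
          C (((k : ℂ) - ω) / 4) * C (k ! : ℂ)⁻¹ := by
      rw [← C_mul, ← C_mul, ← C_mul, hk2]; push_cast; field_simp; congr 1; ring
    have h := hrec (k + 1) le_add_self
    simp only [Nat.add_sub_cancel] at h
    have hC : (k : ℂ[X]) + 2 = C ((k : ℂ) + 2) := by
      simp only [map_add, map_natCast, map_ofNat]
    simp only [hC, h]
    linear_combination (X * I (k + 1)) * hA + I k * hB

theorem four_mul_succ_succ (hJ : IsDividedSequence ω J) (k : ℕ) :
    4 * (((k : ℂ[X]) + 2) * J (k + 2)) = 4 * (X * J (k + 1)) + ((k : ℂ[X]) - C ω) * J k := by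
  have h4 : (4 : ℂ[X]) * C (((k : ℂ) - ω) / 4) = (k : ℂ[X]) - C ω := by
    rw [← C_ofNat, ← C_mul, mul_div_cancel₀ _ (by norm_num), C_sub, C_eq_natCast]
  rw [hJ.succ_succ]
  linear_combination J k * h4

theorem comp_X_add_C_succ_sub {ε : ℂ} (hε : ε * ε = 1) (hJ : IsDividedSequence ω J)
    (k : ℕ) :
    (J (k + 1)).comp (X + C ε) - J (k + 1) = C (ε / 2) * ((J k).comp (X + C ε) + J k) := by
  set e := C (ε / 2)
  set q := X + C ε with hq
  have hqe : X + 2 * e = q := by rw [hq, ← C_ofNat, ← C_mul, mul_div_cancel₀ _ two_ne_zero]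
  have he : 4 * (e * e) = 1 := by
    rw [← C_ofNat, ← C_mul, ← C_mul, show 4 * (ε / 2 * (ε / 2)) = 1 by linear_combination hε, C_1]
  have hrec := hJ.four_mul_succ_succ
  have hrecq (n : ℕ) : 4 * (((n : ℂ[X]) + 2) * (J (n + 2)).comp q) =
      4 * ((X + 2 * e) * (J (n + 1)).comp q) + ((n : ℂ[X]) - C ω) * (J n).comp q := by
    have := congrArg (·.comp q) (hrec n)
    simp only [mul_comp, add_comp, sub_comp, natCast_comp, ofNat_comp, X_comp, C_comp] at this
    rw [hqe]
    exact_mod_cast this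
  induction k using Nat.twoStepInduction with
  | zero =>
    rw [hJ.one, hJ.zero, X_comp, one_comp]
    linear_combination -hqe
  | one =>
    have e₀ := hrec 0
    have eq₀ := hrecq 0
    simp only [hJ.zero, hJ.one, one_comp, X_comp, Nat.cast_zero] at e₀ eq₀ ⊢
    apply mul_left_cancel₀ (show (8 : ℂ[X]) ≠ 0 by norm_num)
    linear_combination eq₀ - e₀ - 4 * X * hqe
  | more n ih₀ ih₁ =>
    have e₀ := hrec n
    have eq₀ := hrecq n
    have e₁ := hrec (n + 1)
    have eq₁ := hrecq (n + 1)
    push_cast at e₁ eq₁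
    have h : 8 * ((n : ℂ[X]) + 3) ≠ 0 := by
      rw [show 8 * ((n : ℂ[X]) + 3) = C (8 * ((n : ℂ) + 3)) by
        simp only [map_mul, map_add, map_natCast, map_ofNat]]
      exact C_ne_zero.2 (by exact_mod_cast (by omega : 8 * (n + 3) ≠ 0))
    apply mul_left_cancel₀ h
    linear_combination 2 * eq₁ - 2 * e₁ + 8 * X * ih₁ + 2 * (n + 1 - C ω) * ih₀
      - 2 * e * (eq₀ + e₀) + 8 * e * ih₁ - 8 * e * e * ih₀ - 2 * e * ((J n).comp q + J n) * he

end IsDividedSequence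

noncomputable def expansion (J : ℕ → ℂ[X]) (N : ℕ) : (ℕ → ℂ) →ₗ[ℂ] ℂ[X] where
  toFun a := ∑ j ∈ range N, C (a j) * J j
  map_add' a b := by simp [add_mul, sum_add_distrib]
  map_smul' c a := by simp [mul_sum, smul_eq_C_mul, mul_assoc]

theorem expansion_apply (J : ℕ → ℂ[X]) (N : ℕ) (a : ℕ → ℂ) :
    expansion J N a = ∑ j ∈ range N, C (a j) * J j := rfl

theorem expansion_zero (J : ℕ → ℂ[X]) (a : ℕ → ℂ) : expansion J 0 a = 0 := rfl

theorem expansion_succ (J : ℕ → ℂ[X]) (N : ℕ) (a : ℕ → ℂ) :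
    expansion J (N + 1) a = expansion J N a + C (a N) * J N :=
  sum_range_succ _ _

-- At `j = 0` the junk value `a (0 - 1) = a 0` is multiplied by `0`.
noncomputable def mulXCoeff (ω : ℂ) (a : ℕ → ℂ) (j : ℕ) : ℂ :=
  j * a (j - 1) - ((j : ℂ) - ω) / 4 * a (j + 1)

namespace IsDividedSequence

variable {ω : ℂ} {J : ℕ → ℂ[X]}

theorem expansion_comp_X_add_C {ε : ℂ} (hε : ε * ε = 1) (hJ : IsDividedSequence ω J)
    (t : ℕ → ℂ) (N : ℕ) :
    (expansion J N (fun j => t j - ε / 2 * t (j + 1))).comp (X + C ε) =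
      expansion J N (fun j => t j + ε / 2 * t (j + 1)) -
        C (t N) * ((J N).comp (X + C ε) - J N) := by
  induction N with
  | zero => simp [expansion_zero, hJ.zero]
  | succ N ih =>
    rw [expansion_succ, expansion_succ, add_comp, ih, mul_comp, C_comp]
    simp only [map_sub, map_add, map_mul]
    linear_combination C (t (N + 1)) * hJ.comp_X_add_C_succ_sub hε N

theorem X_mul_expansion (hJ : IsDividedSequence ω J) (a : ℕ → ℂ) (N : ℕ) :
    X * expansion J (N + 1) a = expansion J (N + 1) (mulXCoeff ω a) +
      C ((N + 1) * a N) * J (N + 1) + C (((N : ℂ) - ω) / 4 * a (N + 1)) * J N := by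
  induction N with
  | zero =>
    simp [expansion_succ, expansion_zero, mulXCoeff, hJ.zero, hJ.one]
  | succ N ih =>
    rw [expansion_succ, mul_add, ih, expansion_succ (N := N + 1)]
    have e := hJ.succ_succ N
    simp only [mulXCoeff, Nat.add_sub_cancel]
    push_cast at e ⊢
    simp only [map_sub, map_add, map_mul, map_natCast, map_one]
    linear_combination -C (a (N + 1)) * e

theorem X_mul_expansion_of_eq_zero (hJ : IsDividedSequence ω J) {a : ℕ → ℂ} {N : ℕ}
    (ha : ∀ j, N ≤ j → a j = 0) :
    X * expansion J (N + 1) a = expansion J (N + 1) (mulXCoeff ω a) := by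
  rw [hJ.X_mul_expansion, ha N le_rfl, ha (N + 1) (by omega)]
  simp

end IsDividedSequence

noncomputable def geomTail (c : ℂ) (r : ℕ → ℂ) (K j : ℕ) : ℂ :=
  ∑ m ∈ range (K + 1), c ^ m * r (j + m)

noncomputable def shiftCoeff (ε : ℂ) (r : ℕ → ℂ) (K j : ℕ) : ℂ :=
  geomTail (ε / 2) r K j + ε / 2 * geomTail (ε / 2) r K (j + 1)

section Coefficients

variable {r : ℕ → ℂ} {K : ℕ}

theorem geomTail_eq_zero (hr : ∀ k, K < k → r k = 0) (c : ℂ) {j : ℕ} (hj : K < j) :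
    geomTail c r K j = 0 :=
  sum_eq_zero fun m _ => by rw [hr (j + m) (by omega), mul_zero]

theorem geomTail_eq_add (hr : ∀ k, K < k → r k = 0) (c : ℂ) (j : ℕ) :
    geomTail c r K j = r j + c * geomTail c r K (j + 1) := by
  rw [geomTail, sum_range_succ', geomTail, mul_sum, sum_range_succ, hr (j + 1 + K) (by omega)]
  simp only [pow_zero, one_mul, add_zero, mul_zero, pow_succ]
  rw [add_comm]
  congr 1
  refine sum_congr rfl fun m _ => ?_
  rw [show j + (m + 1) = j + 1 + m by omega]
  ring

theorem shiftCoeff_eq_zero (hr : ∀ k, K < k → r k = 0) (ε : ℂ) {j : ℕ} (hj : K < j) :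
    shiftCoeff ε r K j = 0 := by
  rw [shiftCoeff, geomTail_eq_zero hr _ hj, geomTail_eq_zero hr _ (by omega), mul_zero, add_zero]

theorem IsDividedSequence.expansion_comp_eq_shiftCoeff {ω ε : ℂ} {J : ℕ → ℂ[X]}
    (hJ : IsDividedSequence ω J) (hε : ε * ε = 1) (hr : ∀ k, K < k → r k = 0) {N : ℕ}
    (hN : K < N) :
    (expansion J N r).comp (X + C ε) = expansion J N (shiftCoeff ε r K) := by
  have h := hJ.expansion_comp_X_add_C hε (geomTail (ε / 2) r K) N
  rw [geomTail_eq_zero hr _ hN, C_0, zero_mul, sub_zero] at h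
  have hr' : r = fun j => geomTail (ε / 2) r K j - ε / 2 * geomTail (ε / 2) r K (j + 1) :=
    funext fun j => by rw [geomTail_eq_add hr _ j]; ring
  conv_lhs => rw [hr']
  exact h

variable {u ω : ℂ}

theorem sub_mul_tail_eq
    (hrec : ∀ k : ℕ, ((k : ℂ) - u) * r k = (((k : ℂ) + 2 + u - ω) / 4) * r (k + 2))
    (hr : ∀ k, K < k → r k = 0) {σ : ℕ → ℂ} (hσ : ∀ j, σ j = r j + σ (j + 2) / 4)
    (hσK : ∀ j, K < j → σ j = 0) (j : ℕ) :
    (2 * u - ω) * σ j = (j + u - ω) * r j := by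
  suffices ∀ n j, K < j + n → (2 * u - ω) * σ j = (j + u - ω) * r j from
    this (K + 1) j (by omega)
  intro n
  induction n with
  | zero => intro j hj; rw [hσK j hj, hr j hj]; ring
  | succ n ih =>
    intro j hj
    have h := ih (j + 2) (by omega)
    push_cast at h
    rw [hσ j]
    linear_combination h / 4 - hrec j

theorem mulXCoeff_shiftCoeff
    (hrec : ∀ k : ℕ, ((k : ℂ) - u) * r k = (((k : ℂ) + 2 + u - ω) / 4) * r (k + 2))
    (hr : ∀ k, K < k → r k = 0) (j : ℕ) :
    mulXCoeff ω (shiftCoeff 1 r K - shiftCoeff (-1) r K) j =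
      u * (shiftCoeff 1 r K j + shiftCoeff (-1) r K j) := by
  set p := geomTail (1 / 2) r K
  set m := geomTail (-1 / 2) r K
  have hp := geomTail_eq_add hr (1 / 2)
  have hm := geomTail_eq_add hr (-1 / 2)
  set σ := fun j => (p j + m j) / 2
  have hσ (j : ℕ) : σ j = r j + σ (j + 2) / 4 := by
    simp only [σ]
    linear_combination (hp j + hm j) / 2 + (hp (j + 1) - hm (j + 1)) / 4
  have hσK (j : ℕ) (hj : K < j) : σ j = 0 := by
    simp only [σ, p, m, geomTail_eq_zero hr _ hj, add_zero, zero_div]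
  have hdiff (i : ℕ) : shiftCoeff 1 r K i - shiftCoeff (-1) r K i = 2 * σ (i + 1) := by
    simp only [shiftCoeff, σ]
    linear_combination hp i - hm i
  have hsum : shiftCoeff 1 r K j + shiftCoeff (-1) r K j = 2 * σ j + σ (j + 2) / 2 := by
    simp only [shiftCoeff, σ]
    linear_combination (hp (j + 1) - hm (j + 1)) / 2
  have hlow :
      (j : ℂ) * (shiftCoeff 1 r K (j - 1) - shiftCoeff (-1) r K (j - 1)) = 2 * j * σ j := by
    rcases j with _ | i
    · simp
    · rw [hdiff, Nat.add_sub_cancel]; ring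
  have key := sub_mul_tail_eq hrec hr hσ hσK (j + 2)
  rw [mulXCoeff, Pi.sub_apply, Pi.sub_apply, hlow, hdiff, hsum]
  push_cast at key
  linear_combination (2 * j - 2 * u) * hσ j - key / 2 + 2 * hrec j

end Coefficients

/-- If `Ĩ_k` satisfy `Ĩ_0 = 1`, `Ĩ_1 = X`, `Ĩ_{k+1} = X Ĩ_k + (k/4)(k-1-ω) Ĩ_{k-1}`, and
coefficients `r̃_k` satisfy `(k-u) r̃_k = ((k+2+u-ω)/4) r̃_{k+2}` and vanish for `k > K`,
then `R(z) = Σ_{k=0}^{K} (r̃_k/k!) Ĩ_k(z)` satisfies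
`(z-u) R(z+1) = (z+u) R(z-1)` as an identity of polynomials. -/
theorem stmt4 (u ω : ℂ) (I : ℕ → Polynomial ℂ) (r : ℕ → ℂ) (K : ℕ)
    (h0 : I 0 = 1) (h1 : I 1 = X)
    (hrec : ∀ k : ℕ, 1 ≤ k →
      I (k + 1) = X * I k + C ((k : ℂ) / 4 * ((k : ℂ) - 1 - ω)) * I (k - 1))
    (hr : ∀ k : ℕ, ((k : ℂ) - u) * r k = (((k : ℂ) + 2 + u - ω) / 4) * r (k + 2))
    (hvanish : ∀ k : ℕ, K < k → r k = 0) :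
    ∀ R : Polynomial ℂ,
      R = ∑ k ∈ Finset.range (K + 1), C (r k / (Nat.factorial k : ℂ)) * I k →
      (X - C u) * R.comp (X + 1) = (X + C u) * R.comp (X - 1) := by
  intro R hR
  have hJ := IsDividedSequence.of_recurrence h0 h1 hrec
  have hRJ : R = expansion (fun k => C ((k ! : ℂ)⁻¹) * I k) (K + 2) r := by
    rw [expansion_succ, hvanish (K + 1) (by omega), C_0, zero_mul, add_zero, hR, expansion_apply]
    refine sum_congr rfl fun k _ => ?_
    rw [div_eq_mul_inv, C_mul, mul_assoc]
  have hX := hJ.X_mul_expansion_of_eq_zero (a := shiftCoeff 1 r K - shiftCoeff (-1) r K)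
    (N := K + 1) fun j hj => by
      rw [Pi.sub_apply, shiftCoeff_eq_zero hvanish _ (by omega),
        shiftCoeff_eq_zero hvanish _ (by omega), sub_zero]
  have hcoef : mulXCoeff ω (shiftCoeff 1 r K - shiftCoeff (-1) r K) =
      u • (shiftCoeff 1 r K + shiftCoeff (-1) r K) :=
    funext (mulXCoeff_shiftCoeff hr hvanish)
  rw [hcoef, map_smul, smul_eq_C_mul, map_sub, map_add] at hX
  rw [show (X + 1 : ℂ[X]) = X + C 1 by rw [C_1], show (X - 1 : ℂ[X]) = X + C (-1) by
      rw [C_neg, C_1, sub_eq_add_neg], hRJ,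
    hJ.expansion_comp_eq_shiftCoeff (one_mul 1) hvanish (by omega),
    hJ.expansion_comp_eq_shiftCoeff (by norm_num) hvanish (by omega)]
  linear_combination hX
end

section
/- Let ω ∈ ℂ, β = 1 - ω/2. In an associative algebra generated by elements s, e with s² = 1, e² = ωe, se = es = e (one-site Brauer relations), the element ρ̂(u) = u(u+β)s - (u+β)·1 + u·e satisfies the unitarity relation ρ̂(u)·ρ̂(-u) = (u² - 1)(u² - β²)·1. -/
/-!
Writing elements of the span of `1, s, e` in coordinates, the relations `s² = 1`, `e² = ωe`,
`se = es = e` give a closed multiplication table. For `ρ̂(u) ρ̂(-u)` the `s`-coordinate cancels,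
the `1`-coordinate is `u²(u² - β²) - (u² - β²)`, and the `e`-coordinate is `u²(2 - 2β - ω)`,
which vanishes exactly because `ω = 2 - 2β`.
-/

namespace OneSiteBrauer

variable {R A : Type*} [CommRing R] [Ring A] [Algebra R A] {ω : R} {s e : A}

theorem combination_mul (hs : s * s = 1) (he : e * e = ω • e) (hse : s * e = e)
    (hes : e * s = e) (a b c a' b' c' : R) :
    (a • s + b • (1 : A) + c • e) * (a' • s + b' • (1 : A) + c' • e) =
      (a * a' + b * b') • (1 : A) + (a * b' + b * a') • s +
        (a * c' + b * c' + c * a' + c * b' + ω * c * c') • e := by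
  simp only [add_mul, mul_add, smul_mul_smul_comm, mul_one, one_mul, hs, hse, hes, he, smul_smul]
  module

def rhoHat (β u : R) (s e : A) : A :=
  (u * (u + β)) • s - (u + β) • (1 : A) + u • e

theorem rhoHat_eq_combination (β u : R) (s e : A) :
    rhoHat β u s e = (u * (u + β)) • s + (-(u + β)) • (1 : A) + u • e := by
  rw [rhoHat, neg_smul, ← sub_eq_add_neg]

theorem rhoHat_mul_rhoHat_neg (hs : s * s = 1) (he : e * e = ω • e) (hse : s * e = e)
    (hes : e * s = e) {β : R} (hβ : ω = 2 - 2 * β) (u : R) :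
    rhoHat β u s e * rhoHat β (-u) s e = ((u ^ 2 - 1) * (u ^ 2 - β ^ 2)) • (1 : A) := by
  rw [rhoHat_eq_combination, rhoHat_eq_combination, combination_mul hs he hse hes, hβ]
  module

end OneSiteBrauer

/-- In an algebra with `s² = 1`, `e² = ωe`, `se = es = e`, the element
`ρ̂(u) = u(u+β)s - (u+β)·1 + u·e` with `β = 1 - ω/2` satisfies the unitarity relation
`ρ̂(u)·ρ̂(-u) = (u²-1)(u²-β²)·1`. -/
theorem stmt13 {B : Type*} [Ring B] [Algebra ℂ B] (ω : ℂ) (s e : B)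
    (hs : s * s = 1) (he : e * e = ω • e) (hse : s * e = e) (hes : e * s = e)
    (u : ℂ) :
    ∀ β : ℂ, β = 1 - ω / 2 →
      ((u * (u + β)) • s - (u + β) • (1 : B) + u • e) *
        (((-u) * (-u + β)) • s - (-u + β) • (1 : B) + (-u) • e)
        = ((u ^ 2 - 1) * (u ^ 2 - β ^ 2)) • (1 : B) := by
  intro β hβ
  exact OneSiteBrauer.rhoHat_mul_rhoHat_neg hs he hse hes (by rw [hβ]; ring) u
end

section
/- In the Brauer algebra B₃(ω) with generators s₁, s₂, e₁, e₂ satisfying the standard relations, the elements ρ̂_i(u) = u(u+β)s_i - (u+β)·1 + u·e_i with β = 1 - ω/2 satisfy the braid Yang–Baxter equation ρ̂₁(u)ρ̂₂(u+v)ρ̂₁(v) = ρ̂₂(v)ρ̂₁(u+v)ρ̂₂(u) for all u, v ∈ ℂ. -/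
/-!
Expand both sides into linear combinations of words in `s₁, s₂, e₁, e₂` and reduce every
word with the defining relations and a few of their consequences (in right-associated form,
the normal form of the expansion), so that both sides become combinations of the same reduced
words of `B₃`. What remains is a comparison of polynomial coefficients in `u, v, β, ω`, which
agree once `ω = 2 - 2β`.
-/

def brauerR {R B : Type*} [CommRing R] [Ring B] [Algebra R B] (β w : R) (s e : B) : B :=
  (w * (w + β)) • s - (w + β) • (1 : B) + w • e

structure IsBrauerB3 {R B : Type*} [CommRing R] [Ring B] [Algebra R B]
    (ω : R) (s₁ s₂ e₁ e₂ : B) : Prop where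
  s₁_mul_self : s₁ * s₁ = 1
  s₂_mul_self : s₂ * s₂ = 1
  e₁_mul_self : e₁ * e₁ = ω • e₁
  e₂_mul_self : e₂ * e₂ = ω • e₂
  s₁_mul_e₁ : s₁ * e₁ = e₁
  e₁_mul_s₁ : e₁ * s₁ = e₁
  s₂_mul_e₂ : s₂ * e₂ = e₂
  e₂_mul_s₂ : e₂ * s₂ = e₂
  braid : s₁ * s₂ * s₁ = s₂ * s₁ * s₂
  e₁_mul_e₂_mul_e₁ : e₁ * e₂ * e₁ = e₁
  e₂_mul_e₁_mul_e₂ : e₂ * e₁ * e₂ = e₂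
  s₁_mul_e₂_mul_e₁ : s₁ * e₂ * e₁ = s₂ * e₁
  e₂_mul_e₁_mul_s₂ : e₂ * e₁ * s₂ = e₂ * s₁
  e₁_mul_e₂_mul_s₁ : e₁ * e₂ * s₁ = e₁ * s₂
  s₂_mul_e₁_mul_e₂ : s₂ * e₁ * e₂ = s₁ * e₂

namespace IsBrauerB3

variable {R B : Type*} [CommRing R] [Ring B] [Algebra R B] {ω : R} {s₁ s₂ e₁ e₂ : B}

theorem swap (h : IsBrauerB3 ω s₁ s₂ e₁ e₂) : IsBrauerB3 ω s₂ s₁ e₂ e₁ :=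
  ⟨h.s₂_mul_self, h.s₁_mul_self, h.e₂_mul_self, h.e₁_mul_self, h.s₂_mul_e₂, h.e₂_mul_s₂,
    h.s₁_mul_e₁, h.e₁_mul_s₁, h.braid.symm, h.e₂_mul_e₁_mul_e₂, h.e₁_mul_e₂_mul_e₁,
    h.s₂_mul_e₁_mul_e₂, h.e₁_mul_e₂_mul_s₁, h.e₂_mul_e₁_mul_s₂, h.s₁_mul_e₂_mul_e₁⟩

variable (h : IsBrauerB3 ω s₁ s₂ e₁ e₂)
include h

theorem s₂_mul_s₁_mul_s₂_assoc : s₂ * (s₁ * s₂) = s₁ * (s₂ * s₁) := by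
  rw [← mul_assoc, ← h.braid, mul_assoc]

theorem e₁_mul_e₂_mul_e₁_assoc : e₁ * (e₂ * e₁) = e₁ := by rw [← mul_assoc, h.e₁_mul_e₂_mul_e₁]

theorem s₁_mul_e₂_mul_e₁_assoc : s₁ * (e₂ * e₁) = s₂ * e₁ := by rw [← mul_assoc, h.s₁_mul_e₂_mul_e₁]

theorem e₁_mul_e₂_mul_s₁_assoc : e₁ * (e₂ * s₁) = e₁ * s₂ := by rw [← mul_assoc, h.e₁_mul_e₂_mul_s₁]

theorem s₁_mul_s₂_mul_e₁ : s₁ * (s₂ * e₁) = e₂ * e₁ := by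
  rw [← h.s₁_mul_e₂_mul_e₁, mul_assoc, ← mul_assoc s₁ s₁, h.s₁_mul_self, one_mul]

theorem e₁_mul_s₂_mul_s₁ : e₁ * (s₂ * s₁) = e₁ * e₂ := by
  rw [← mul_assoc, ← h.e₁_mul_e₂_mul_s₁, mul_assoc, h.s₁_mul_self, mul_one]

theorem e₁_mul_s₂_mul_e₁ : e₁ * (s₂ * e₁) = e₁ := by
  rw [← mul_assoc, ← h.e₁_mul_e₂_mul_s₁, mul_assoc, h.s₁_mul_e₁, h.e₁_mul_e₂_mul_e₁]

theorem s₁_mul_e₂_mul_s₁ : s₁ * (e₂ * s₁) = s₂ * (e₁ * s₂) := by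
  rw [← h.e₁_mul_e₂_mul_s₁, ← mul_assoc s₂, ← mul_assoc s₂ e₁ e₂, h.s₂_mul_e₁_mul_e₂, mul_assoc]

theorem yangBaxter {β : R} (hω : ω = 2 - 2 * β) (u v : R) :
    brauerR β u s₁ e₁ * brauerR β (u + v) s₂ e₂ * brauerR β v s₁ e₁ =
      brauerR β v s₂ e₂ * brauerR β (u + v) s₁ e₁ * brauerR β u s₂ e₂ := by
  have h' := h.swap
  simp only [brauerR, sub_mul, mul_sub, add_mul, mul_add, smul_mul_assoc, mul_smul_comm,
    smul_smul, smul_sub, smul_add, one_mul, mul_one, mul_assoc,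
    h.s₁_mul_self, h.s₂_mul_self, h.e₁_mul_self, h.e₂_mul_self, h.s₁_mul_e₁, h.e₁_mul_s₁,
    h.s₂_mul_e₂, h.e₂_mul_s₂, h.s₂_mul_s₁_mul_s₂_assoc,
    h.e₁_mul_e₂_mul_e₁_assoc, h'.e₁_mul_e₂_mul_e₁_assoc,
    h.s₁_mul_e₂_mul_e₁_assoc, h'.s₁_mul_e₂_mul_e₁_assoc,
    h.e₁_mul_e₂_mul_s₁_assoc, h'.e₁_mul_e₂_mul_s₁_assoc,
    h.s₁_mul_s₂_mul_e₁, h'.s₁_mul_s₂_mul_e₁, h.e₁_mul_s₂_mul_s₁, h'.e₁_mul_s₂_mul_s₁,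
    h.e₁_mul_s₂_mul_e₁, h'.e₁_mul_s₂_mul_e₁, h.s₁_mul_e₂_mul_s₁]
  subst hω
  match_scalars <;> ring

end IsBrauerB3

/-- In the Brauer algebra `B₃(ω)` the elements `ρ̂_i(u) = u(u+β)s_i - (u+β)·1 + u·e_i`,
`β = 1 - ω/2`, satisfy the braid Yang–Baxter equation
`ρ̂₁(u)ρ̂₂(u+v)ρ̂₁(v) = ρ̂₂(v)ρ̂₁(u+v)ρ̂₂(u)`. -/
theorem stmt14 {B : Type*} [Ring B] [Algebra ℂ B] (ω : ℂ)
    (s1 s2 e1 e2 : B)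
    (hs1 : s1 * s1 = 1) (hs2 : s2 * s2 = 1)
    (he1 : e1 * e1 = ω • e1) (he2 : e2 * e2 = ω • e2)
    (hse1 : s1 * e1 = e1) (hes1 : e1 * s1 = e1)
    (hse2 : s2 * e2 = e2) (hes2 : e2 * s2 = e2)
    (hbraid : s1 * s2 * s1 = s2 * s1 * s2)
    (hee1 : e1 * e2 * e1 = e1) (hee2 : e2 * e1 * e2 = e2)
    (hmix1 : s1 * e2 * e1 = s2 * e1) (hmix2 : e2 * e1 * s2 = e2 * s1)
    (hmix3 : e1 * e2 * s1 = e1 * s2) (hmix4 : s2 * e1 * e2 = s1 * e2)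
    (u v : ℂ) :
    ∀ β : ℂ, β = 1 - ω / 2 →
    ∀ ρ : ℂ → B → B → B,
      (ρ = fun w s e => (w * (w + β)) • s - (w + β) • (1 : B) + w • e) →
      ρ u s1 e1 * ρ (u + v) s2 e2 * ρ v s1 e1 =
        ρ v s2 e2 * ρ (u + v) s1 e1 * ρ u s2 e2 := by
  rintro β hβ _ rfl
  have h : IsBrauerB3 ω s1 s2 e1 e2 :=
    ⟨hs1, hs2, he1, he2, hse1, hes1, hse2, hes2, hbraid, hee1, hee2, hmix1, hmix2, hmix3, hmix4⟩
  exact h.yangBaxter (by rw [hβ]; ring) u v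
end
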